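/- arXiv:2512.14318 — 2 statements merged into one kernel-verified Lean document; each statement's English description precedes it below -/
import Mathlib

section
/- For every natural number q ≥ 1, the iterated integral α_q := ∫_1^2 ⋯ ∫_1^2 (1 + s_1 + ⋯ + s_q)^{-(q+1)} ds_1 ⋯ ds_q equals q!/(2q+1)!. -/
/-!
Integrating out one coordinate of the cube `[1,2]^q` turns `(c + x + ∑ yᵢ)^{-(q+2)}` into
`((c + 1 + ∑ yᵢ)^{-(q+1)} - (c + 2 + ∑ yᵢ)^{-(q+1)}) / (q+1)`, so the shifted integrals
`I_q(c) = ∫_{[1,2]^q} (c + ∑ sᵢ)^{-(q+1)}` satisfy a recursion in `q` whose solution is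
`1 / ((c+q)(c+q+1)⋯(c+2q))`: the rising factorial `P_n` obeys `1/P_n(x) - 1/P_n(x+1) = n/P_{n+1}(x)`.
At `c = 1` the rising factorial is `(2q+1)!/q!`.
-/

open MeasureTheory Set Polynomial

theorem ascPochhammer_eval_inv_sub_inv_add_one {K : Type*} [Field K] (n : ℕ) {x : K}
    (hx : (ascPochhammer K (n + 1)).eval x ≠ 0) :
    ((ascPochhammer K n).eval x)⁻¹ - ((ascPochhammer K n).eval (x + 1))⁻¹ =
      n * ((ascPochhammer K (n + 1)).eval x)⁻¹ := by
  have hright : (ascPochhammer K (n + 1)).eval x = (ascPochhammer K n).eval x * (x + n) :=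
    ascPochhammer_succ_eval n x
  have hleft : (ascPochhammer K (n + 1)).eval x = x * (ascPochhammer K n).eval (x + 1) := by
    simp [ascPochhammer_succ_left, eval_comp]
  obtain ⟨hPx, hxn⟩ := mul_ne_zero_iff.mp (hright ▸ hx)
  obtain ⟨hx0, hPx1⟩ := mul_ne_zero_iff.mp (hleft ▸ hx)
  rw [hright]
  field_simp
  linear_combination hleft.symm.trans hright

theorem integral_pi_fin_succ {α E : Type*} [MeasurableSpace α] [NormedAddCommGroup E]
    [NormedSpace ℝ E] {n : ℕ} (μ : Measure α) [SigmaFinite μ] {f : (Fin (n + 1) → α) → E}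
    (hf : Integrable f (Measure.pi fun _ => μ)) :
    ∫ x, f x ∂(Measure.pi fun _ => μ) =
      ∫ y, ∫ x, f (Fin.cons x y) ∂μ ∂(Measure.pi fun _ => μ) := by
  have he := (measurePreserving_piFinSuccAbove (fun _ : Fin (n + 1) => μ) 0).symm
  rw [← he.integral_comp', integral_prod_symm]
  · simp [MeasurableEquiv.piFinSuccAbove_symm_apply, Fin.insertNthEquiv]
  · exact he.integrable_comp_emb (MeasurableEquiv.measurableEmbedding _) |>.mpr hf

theorem setIntegral_univ_pi_fin_succ {α E : Type*} [MeasurableSpace α] [NormedAddCommGroup E]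
    [NormedSpace ℝ E] {n : ℕ} (μ : Measure α) [SigmaFinite μ] (S : Set α)
    {f : (Fin (n + 1) → α) → E} (hf : IntegrableOn f (univ.pi fun _ => S) (Measure.pi fun _ => μ)) :
    ∫ x in univ.pi (fun _ => S), f x ∂(Measure.pi fun _ => μ) =
      ∫ y in univ.pi (fun _ => S), ∫ x in S, f (Fin.cons x y) ∂μ ∂(Measure.pi fun _ => μ) := by
  rw [IntegrableOn, Measure.restrict_pi_pi] at hf
  rw [Measure.restrict_pi_pi, Measure.restrict_pi_pi, integral_pi_fin_succ _ hf]

theorem integral_Icc_inv_pow_add (m : ℕ) {a b d : ℝ} (hab : a ≤ b) (had : 0 < a + d) :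
    ∫ x in Icc a b, ((x + d) ^ (m + 2))⁻¹ =
      (((a + d) ^ (m + 1))⁻¹ - ((b + d) ^ (m + 1))⁻¹) / (m + 1) := by
  have hzero : (0 : ℝ) ∉ uIcc (a + d) (b + d) := by
    rw [uIcc_of_le (by linarith)]
    exact fun h => h.1.not_gt had
  rw [integral_Icc_eq_integral_Ioc, ← intervalIntegral.integral_of_le hab]
  simp_rw [← zpow_natCast, ← zpow_neg]
  rw [intervalIntegral.integral_comp_add_right (fun x => x ^ (-((m + 2 : ℕ) : ℤ))),
    integral_zpow (.inr ⟨by omega, hzero⟩)]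
  rw [show -((m + 2 : ℕ) : ℤ) + 1 = -((m + 1 : ℕ) : ℤ) by push_cast; ring, zpow_neg, zpow_neg,
    zpow_natCast, zpow_natCast, Int.cast_neg, Int.cast_natCast]
  push_cast
  rw [show -((m : ℝ) + 2) + 1 = -(m + 1) by ring, div_neg, ← neg_div, neg_sub]

theorem natCast_le_sum_of_mem_univ_pi_Icc {q : ℕ} {s : Fin q → ℝ}
    (hs : s ∈ univ.pi fun _ => Icc (1 : ℝ) 2) : (q : ℝ) ≤ ∑ i, s i := by
  simpa using Finset.card_nsmul_le_sum Finset.univ s 1 fun i _ => (hs i (mem_univ i)).1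

theorem integrableOn_inv_pow_const_add_sum (q k : ℕ) {c : ℝ} (hc : 0 < c + q) :
    IntegrableOn (fun s : Fin q → ℝ => ((c + ∑ i, s i) ^ k)⁻¹)
      (univ.pi fun _ => Icc (1 : ℝ) 2) := by
  refine ContinuousOn.integrableOn_compact (isCompact_univ_pi fun _ => isCompact_Icc) ?_
  have hcont : Continuous fun s : Fin q → ℝ => (c + ∑ i, s i) ^ k := by fun_prop
  refine hcont.continuousOn.inv₀ fun s hs => pow_ne_zero k ?_
  linarith [natCast_le_sum_of_mem_univ_pi_Icc hs]

theorem setIntegral_inv_pow_const_add_sum (q : ℕ) {c : ℝ} (hc : 0 < c + q) :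
    ∫ s in univ.pi (fun _ : Fin q => Icc (1 : ℝ) 2), ((c + ∑ i, s i) ^ (q + 1))⁻¹ =
      ((ascPochhammer ℝ (q + 1)).eval (c + q))⁻¹ := by
  induction q generalizing c with
  | zero => simp [measureReal_def, Real.volume_Icc_pi]
  | succ q ih =>
    have hc' : 0 < c + q + 1 := by push_cast at hc; linarith
    have hinner : ∀ y ∈ univ.pi (fun _ : Fin q => Icc (1 : ℝ) 2),
        ∫ x in Icc (1 : ℝ) 2, ((c + ∑ i, (Fin.cons x y : Fin (q + 1) → ℝ) i) ^ (q + 1 + 1))⁻¹ =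
          (((c + 1 + ∑ i, y i) ^ (q + 1))⁻¹ - ((c + 2 + ∑ i, y i) ^ (q + 1))⁻¹) / (q + 1) := by
      intro y hy
      have hy' := natCast_le_sum_of_mem_univ_pi_Icc hy
      simp_rw [Fin.sum_cons, add_left_comm c, integral_Icc_inv_pow_add q one_le_two
        (by linarith : 0 < 1 + (c + ∑ i, y i)), ← add_assoc, add_comm (1 : ℝ) c,
        add_comm (2 : ℝ) c]
    rw [volume_pi, setIntegral_univ_pi_fin_succ _ _ (integrableOn_inv_pow_const_add_sum _ _ hc),
      ← volume_pi, setIntegral_congr_fun (MeasurableSet.univ_pi fun _ => measurableSet_Icc) hinner,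
      integral_div, integral_sub (integrableOn_inv_pow_const_add_sum _ _ (by linarith))
        (integrableOn_inv_pow_const_add_sum _ _ (by linarith)),
      ih (by linarith), ih (by linarith)]
    have htelescope := ascPochhammer_eval_inv_sub_inv_add_one (q + 1) (x := c + (q + 1))
      (ascPochhammer_pos _ _ (by linarith)).ne'
    rw [show c + 1 + q = c + (q + 1) by ring, show c + 2 + q = c + (q + 1) + 1 by ring, htelescope]
    push_cast
    field_simp

theorem alpha_q_eq_factorial_ratio_general (q : ℕ) :
    ∫ s in (Set.univ.pi fun _ : Fin q => Set.Icc (1 : ℝ) 2),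
        ((1 + ∑ i, s i) ^ (q + 1))⁻¹ =
      (Nat.factorial q : ℝ) / (Nat.factorial (2 * q + 1)) := by
  rw [setIntegral_inv_pow_const_add_sum q (by positivity), show 2 * q + 1 = q + (q + 1) by ring,
    ← factorial_mul_ascPochhammer, add_comm (1 : ℝ), div_mul_cancel_left₀ (by positivity)]

/-- The iterated integral `α_q = ∫_1^2 ⋯ ∫_1^2 (1 + s_1 + ⋯ + s_q)^{-(q+1)} ds` over the
cube `[1,2]^q` equals `q!/(2q+1)!`. -/
theorem alpha_q_eq_factorial_ratio (q : ℕ) (hq : 1 ≤ q) :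
    ∫ s in (Set.univ.pi fun _ : Fin q => Set.Icc (1 : ℝ) 2),
        ((1 + ∑ i, s i) ^ (q + 1))⁻¹ =
      (Nat.factorial q : ℝ) / (Nat.factorial (2 * q + 1)) :=
  alpha_q_eq_factorial_ratio_general q
end

section
/- Define H(F)(η, x_0,…,x_{k-1}) := Σ_{i=0}^{k-1} (-1)^i F(η, x_0,…,x_i, x_i,…,x_{k-1}) (doubling the i-th entry). Then with ε the γ-extended Alexander–Spanier differential, I and P as above, one has the homotopy identity ε ∘ H + H ∘ ε = I ∘ P − id on functions F : Γ × M^{k+1} → ℂ satisfying the finite-support condition. -/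
/-!
Split `ε = ε₀ + δ'`, where `δ' = Σ_{i ≥ 1} (-1)^i d_i` consists of the ordinary faces and `ε₀` is
the zeroth face twisted by `χ`, and write `H = Σ_i (-1)^i s_i` with the degeneracies `s_i`.
The simplicial identities `d_i s_i = d_{i+1} s_i = id`, `d_j s_{i+1} = s_i d_j` (`j ≤ i`) and
`d_{j+1} s_i = s_i d_j` (`i < j`) make `δ' H + H δ'` cancel in pairs, except for the unpartnered
term `-d_1 s_0 = -id`. In `ε₀ H + H ε₀` the sums `Σ (-1)^i s_i d_0` and `Σ (-1)^i d_0 s_i`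
telescope because `d_0 s_0 = id` and `d_0 s_{i+1} = s_i d_0`, leaving `Σ_h F(ηh, x) χ(η⁻¹ x₀)`,
which is `I (P F)` after the substitution `h ↦ η⁻¹ h`.
-/

/-- The γ-extended Alexander–Spanier differential. -/
noncomputable def extAS {Γ M : Type*} [Group Γ] [MulAction Γ M] (χ : M → ℂ) {n : ℕ}
    (f : Γ → (Fin (n + 1) → M) → ℂ) : Γ → (Fin (n + 2) → M) → ℂ :=
  fun η xs =>
    (∑ᶠ h : Γ, f (η * h) fun i => xs i.succ) * χ (η⁻¹ • xs 0) +
      ∑ i : Fin (n + 1), (-1 : ℂ) ^ ((i : ℕ) + 1) * f η (xs ∘ (i.succ).succAbove)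

/-- `P(F)(x_0,…,x_k) = Σ_{h∈Γ} F(h, x_0,…,x_k)`. -/
noncomputable def ASP {Γ M : Type*} {n : ℕ}
    (F : Γ → (Fin (n + 1) → M) → ℂ) : (Fin (n + 1) → M) → ℂ :=
  fun xs => ∑ᶠ h : Γ, F h xs

/-- `I(f)(η, x_0,…,x_k) = f(x_0,…,x_k) · χ(η⁻¹ x_0)`. -/
noncomputable def ASI {Γ M : Type*} [Group Γ] [MulAction Γ M] (χ : M → ℂ) {n : ℕ}
    (f : (Fin (n + 1) → M) → ℂ) : Γ → (Fin (n + 1) → M) → ℂ :=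
  fun η xs => f xs * χ (η⁻¹ • xs 0)

/-- The homotopy operator `H(F)(η, x_0,…,x_{k-1}) = Σ_i (-1)^i F(η, x_0,…,x_i,x_i,…,x_{k-1})`,
doubling the `i`-th entry. -/
noncomputable def ASH {Γ M : Type*} {n : ℕ}
    (F : Γ → (Fin (n + 2) → M) → ℂ) : Γ → (Fin (n + 1) → M) → ℂ :=
  fun η xs => ∑ i : Fin (n + 1), (-1 : ℂ) ^ (i : ℕ) *
    F η (fun j =>
      if h : (j : ℕ) ≤ (i : ℕ) then xs ⟨j, lt_of_le_of_lt h i.isLt⟩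
      else xs ⟨(j : ℕ) - 1, by have := j.isLt; omega⟩)

open Finset Function

/-- `ℕ`-indexed versions of `Fin.predAbove` and `Fin.succAbove`: the simplicial identities between
them hold as equalities of maps `ℕ → ℕ`, in every dimension at once. -/
def degenIdx (i l : ℕ) : ℕ := if l ≤ i then l else l - 1

def faceIdx (j l : ℕ) : ℕ := if l < j then l else l + 1

theorem degenIdx_zero_right (i : ℕ) : degenIdx i 0 = 0 := by
  simp [degenIdx]

theorem degenIdx_comp_faceIdx_self (i : ℕ) : degenIdx i ∘ faceIdx i = id := by
  funext l; simp only [degenIdx, faceIdx, comp_apply, id]; split_ifs <;> omega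

theorem degenIdx_comp_faceIdx_succ (i : ℕ) : degenIdx i ∘ faceIdx (i + 1) = id := by
  funext l; simp only [degenIdx, faceIdx, comp_apply, id]; split_ifs <;> omega

theorem degenIdx_succ_comp_faceIdx {i j : ℕ} (h : j ≤ i) :
    degenIdx (i + 1) ∘ faceIdx j = faceIdx j ∘ degenIdx i := by
  funext l; simp only [degenIdx, faceIdx, comp_apply]; split_ifs <;> omega

theorem degenIdx_comp_faceIdx_succ_of_lt {i j : ℕ} (h : i < j) :
    degenIdx i ∘ faceIdx (j + 1) = faceIdx j ∘ degenIdx i := by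
  funext l; simp only [degenIdx, faceIdx, comp_apply]; split_ifs <;> omega

theorem Fin.val_succAbove_eq_faceIdx {n : ℕ} (p : Fin (n + 1)) (l : Fin n) :
    (p.succAbove l : ℕ) = faceIdx p l := by
  unfold Fin.succAbove faceIdx
  split_ifs <;> simp_all [Fin.lt_def]

theorem sum_range_succ_sum_range_succ {A : Type*} [AddCommMonoid A] (x : ℕ → ℕ → A) (n : ℕ) :
    ∑ i ∈ range (n + 1), ∑ j ∈ range (n + 1), x i j
      = ∑ i ∈ range n, ∑ j ∈ range n, x i j + ∑ i ∈ range n, x i n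
        + ∑ j ∈ range (n + 1), x n j := by
  rw [sum_range_succ _ n]
  simp only [sum_range_succ (x _) n, sum_add_distrib]

section SeqCochain

variable {M R : Type*} [CommRing R]

/-- A function `c` of sequences `u : ℕ → M` stands for the cochains `xs ↦ c (u ∘ Fin.val)` of all
degrees simultaneously; the degree only enters through the length `n` of the alternating sums. -/
def seqDegen (n : ℕ) (c : (ℕ → M) → R) (u : ℕ → M) : R :=
  ∑ i ∈ range n, (-1) ^ i * c (u ∘ degenIdx i)

def seqFace (n : ℕ) (c : (ℕ → M) → R) (u : ℕ → M) : R :=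
  ∑ j ∈ range n, (-1) ^ (j + 1) * c (u ∘ faceIdx (j + 1))

theorem seqDegen_add (n : ℕ) (c₁ c₂ : (ℕ → M) → R) (u : ℕ → M) :
    seqDegen n (fun v => c₁ v + c₂ v) u = seqDegen n c₁ u + seqDegen n c₂ u := by
  simp only [seqDegen, mul_add, sum_add_distrib]

theorem seqDegen_mul_apply_zero (n : ℕ) (c : (ℕ → M) → R) (a : M → R) (u : ℕ → M) :
    seqDegen n (fun v => c v * a (v 0)) u = seqDegen n c u * a (u 0) := by
  simp only [seqDegen, sum_mul, mul_assoc, comp_apply, degenIdx_zero_right]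

theorem finsum_seqDegen {ι : Type*} (n : ℕ) (c : ι → (ℕ → M) → R)
    (hc : ∀ v, (support fun h => c h v).Finite) (u : ℕ → M) :
    ∑ᶠ h, seqDegen n (c h) u = seqDegen n (fun v => ∑ᶠ h, c h v) u := by
  simp only [seqDegen]
  rw [finsum_sum_comm _ _ fun i _ => (hc _).subset (support_mul_subset_right _ _)]
  exact sum_congr rfl fun i _ => (mul_finsum' _ _ (hc _)).symm

theorem seqDegen_comp_faceIdx_zero_add (n : ℕ) (c : (ℕ → M) → R) (u : ℕ → M) :
    seqDegen n c (u ∘ faceIdx 0) + seqDegen (n + 1) (fun v => c (v ∘ faceIdx 0)) u = c u := by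
  have shift : ∀ i, (-1) ^ (i + 1) * c ((u ∘ degenIdx (i + 1)) ∘ faceIdx 0)
      = -((-1) ^ i * c ((u ∘ faceIdx 0) ∘ degenIdx i)) := by
    intro i
    rw [comp_assoc, degenIdx_succ_comp_faceIdx (Nat.zero_le i), ← comp_assoc]
    ring
  rw [seqDegen, seqDegen, sum_range_succ', sum_congr rfl fun i _ => shift i, sum_neg_distrib,
    comp_assoc, degenIdx_comp_faceIdx_self, comp_id]
  ring

theorem seqFace_seqDegen_add_seqDegen_seqFace (n : ℕ) (c : (ℕ → M) → R) (u : ℕ → M) :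
    seqFace n (seqDegen n c) u + seqDegen (n + 1) (seqFace (n + 1) c) u = -c u := by
  induction n with
  | zero =>
    simp [seqFace, seqDegen, comp_assoc, degenIdx_comp_faceIdx_succ]
  | succ n ih =>
    -- Going from `n` to `n + 1` adds a last row and column to both double sums. By the simplicial
    -- identities the new entries of the second are minus those of the first, apart from two
    -- identity terms of opposite signs.
    set x : ℕ → ℕ → R :=
      fun j i => (-1) ^ (j + 1) * ((-1) ^ i * c (u ∘ faceIdx (j + 1) ∘ degenIdx i))
    set y : ℕ → ℕ → R :=
      fun i j => (-1) ^ i * ((-1) ^ (j + 1) * c (u ∘ degenIdx i ∘ faceIdx (j + 1)))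
    have hA : ∀ m, seqFace m (seqDegen m c) u = ∑ j ∈ range m, ∑ i ∈ range m, x j i := by
      intro m; simp only [seqFace, seqDegen, mul_sum]; rfl
    have hB : ∀ m, seqDegen m (seqFace m c) u = ∑ i ∈ range m, ∑ j ∈ range m, y i j := by
      intro m; simp only [seqFace, seqDegen, mul_sum]; rfl
    have hcol : ∑ i ∈ range (n + 1), y i (n + 1) = -∑ i ∈ range (n + 1), x n i := by
      rw [← sum_neg_distrib]
      refine sum_congr rfl fun i hi => ?_
      simp only [x, y]
      rw [degenIdx_comp_faceIdx_succ_of_lt (mem_range.mp hi)]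
      ring
    have hrow : ∑ j ∈ range (n + 2), y (n + 1) j = -∑ j ∈ range n, x j n := by
      have hdiag : y (n + 1) n + y (n + 1) (n + 1) = 0 := by
        simp only [y, degenIdx_comp_faceIdx_self, degenIdx_comp_faceIdx_succ]
        ring
      have hsub : ∀ j ∈ range n, y (n + 1) j = -x j n := by
        intro j hj
        simp only [x, y]
        rw [degenIdx_succ_comp_faceIdx (mem_range.mp hj)]
        ring
      rw [sum_range_succ, sum_range_succ, sum_congr rfl hsub, sum_neg_distrib]
      linear_combination hdiag
    rw [hA, hB] at ih ⊢
    rw [sum_range_succ_sum_range_succ x, sum_range_succ_sum_range_succ y (n + 1)]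
    linear_combination ih + hcol + hrow

end SeqCochain

theorem ASH_comp_val {Γ M : Type*} {n : ℕ} (F : Γ → (Fin (n + 2) → M) → ℂ) (η : Γ)
    (u : ℕ → M) : ASH F η (u ∘ Fin.val) = seqDegen (n + 1) (fun v => F η (v ∘ Fin.val)) u := by
  rw [ASH, seqDegen, ← Fin.sum_univ_eq_sum_range]
  refine sum_congr rfl fun i _ => ?_
  congr 2
  funext j
  simp only [comp_apply, degenIdx]
  split_ifs <;> rfl

theorem extAS_comp_val {Γ M : Type*} [Group Γ] [MulAction Γ M] (χ : M → ℂ) {n : ℕ}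
    (F : Γ → (Fin (n + 1) → M) → ℂ) (η : Γ) (u : ℕ → M) :
    extAS χ F η (u ∘ Fin.val)
      = (∑ᶠ h, F (η * h) ((u ∘ faceIdx 0) ∘ Fin.val)) * χ (η⁻¹ • u 0)
        + seqFace (n + 1) (fun v => F η (v ∘ Fin.val)) u := by
  have hface : ∀ p : Fin (n + 2), (u ∘ Fin.val) ∘ p.succAbove = (u ∘ faceIdx p) ∘ Fin.val := by
    intro p; funext l; simp [Fin.val_succAbove_eq_faceIdx]
  rw [extAS, seqFace, ← Fin.sum_univ_eq_sum_range (fun j => (-1) ^ (j + 1) * _)]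
  simp only [hface, Fin.val_succ]
  rfl

theorem homotopy_identity_general (Γ M : Type*) [Group Γ] [MulAction Γ M] (χ : M → ℂ)
    (k : ℕ) (F : Γ → (Fin (k + 2) → M) → ℂ)
    (hF : ∀ xs : Fin (k + 2) → M, (Function.support fun g : Γ => F g xs).Finite) :
    ∀ (η : Γ) (xs : Fin (k + 2) → M),
      extAS χ (ASH F) η xs + ASH (extAS χ F) η xs
        = ASI χ (ASP (Γ := Γ) F) η xs - F η xs := by
  intro η xs
  obtain ⟨u, rfl⟩ := Fin.val_injective.surjective_comp_right' (fun _ => xs 0) xs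
  set G : (ℕ → M) → ℂ := fun v => ∑ᶠ h, F (η * h) (v ∘ Fin.val)
  have hP : ASP F (u ∘ Fin.val) = G u := (finsum_comp_equiv (Equiv.mulLeft η)).symm
  calc
    _ = (seqDegen (k + 1) G (u ∘ faceIdx 0) + seqDegen (k + 2) (fun v => G (v ∘ faceIdx 0)) u)
        * χ (η⁻¹ • u 0)
        + (seqFace (k + 1) (seqDegen (k + 1) fun v => F η (v ∘ Fin.val)) u
          + seqDegen (k + 2) (seqFace (k + 2) fun v => F η (v ∘ Fin.val)) u) := by
      simp only [extAS_comp_val, ASH_comp_val]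
      rw [finsum_seqDegen _ _ fun v => (hF _).preimage (mul_right_injective η).injOn,
        seqDegen_add, seqDegen_mul_apply_zero _ _ (fun x => χ (η⁻¹ • x))]
      ring
    _ = ASI χ (ASP F) η (u ∘ Fin.val) - F η (u ∘ Fin.val) := by
      rw [seqDegen_comp_faceIdx_zero_add, seqFace_seqDegen_add_seqDegen_seqFace, ASI, hP]
      rfl

/-- The homotopy identity `ε ∘ H + H ∘ ε = I ∘ P − id` on extended Alexander–Spanier
cochains with the finite-support condition, for a cut-off function `χ`. -/
theorem homotopy_identity (Γ M : Type*) [Group Γ] [MulAction Γ M] (χ : M → ℂ)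
    (hχfin : ∀ x : M, (Function.support fun h : Γ => χ (h⁻¹ • x)).Finite)
    (hχsum : ∀ x : M, ∑ᶠ h : Γ, χ (h⁻¹ • x) = 1)
    (k : ℕ) (F : Γ → (Fin (k + 2) → M) → ℂ)
    (hF : ∀ xs : Fin (k + 2) → M, (Function.support fun g : Γ => F g xs).Finite) :
    ∀ (η : Γ) (xs : Fin (k + 2) → M),
      extAS χ (ASH F) η xs + ASH (extAS χ F) η xs
        = ASI χ (ASP (Γ := Γ) F) η xs - F η xs :=
  homotopy_identity_general Γ M χ k F hF
end
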